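/- arXiv:2003.10393 — 2 statements merged into one kernel-verified Lean document; each statement's English description precedes it below -/
import Mathlib

section
/- Let λ ≥ 1 be a real and N a Poisson(λ) random variable. Then for every x ∈ ℕ, Pr(N = x) ≤ e/√(2π·⌊λ⌋). -/
/-- The probability mass function of the `Poisson (lam)` distribution:
`x ↦ exp (-lam) * lam^x / x!`. -/
noncomputable def poissonPmfR (lam : ℝ) (x : ℕ) : ℝ :=
  Real.exp (-lam) * lam ^ x / (x.factorial : ℝ)

/-!
The ratio `p(k + 1) / p(k) = λ / (k + 1)` of consecutive Poisson probabilities shows that the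
mode is `m = ⌊λ⌋`. As a function of the mean, `t ↦ e^{-t} t^m` is maximal at `t = m`, so
`p(m) ≤ e^{-m} m^m / m!`, and Stirling's lower bound `m! ≥ √(2πm) (m/e)^m` turns this into
`p(m) ≤ 1 / √(2πm)`.
-/

open Real

namespace Real

theorem exp_neg_mul_pow_le_exp_neg_mul_pow_self {t : ℝ} (ht : 0 ≤ t) (n : ℕ) :
    exp (-t) * t ^ n ≤ exp (-n) * (n : ℝ) ^ n := by
  rcases Nat.eq_zero_or_pos n with rfl | hn
  · simpa using exp_le_one_iff.mpr (neg_nonpos.mpr ht)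
  have hn' : (0 : ℝ) < n := by exact_mod_cast hn
  have hratio : t / n ≤ exp (t / n - 1) := by
    simpa using add_one_le_exp (t / n - 1)
  have hpow : (t / n) ^ n ≤ exp (t - n) := by
    calc (t / n) ^ n ≤ exp (t / n - 1) ^ n := by gcongr
      _ = exp (t - n) := by rw [← exp_nat_mul]; congr 1; field_simp
  rw [div_pow, div_le_iff₀ (by positivity)] at hpow
  calc exp (-t) * t ^ n ≤ exp (-t) * (exp (t - n) * (n : ℝ) ^ n) := by gcongr
    _ = exp (-n) * (n : ℝ) ^ n := by rw [← mul_assoc, ← exp_add]; ring_nf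

end Real

section PoissonPmf

variable {lam : ℝ}

theorem poissonPmfR_nonneg (hlam : 0 ≤ lam) (k : ℕ) : 0 ≤ poissonPmfR lam k := by
  unfold poissonPmfR; positivity

theorem poissonPmfR_succ (lam : ℝ) (k : ℕ) :
    poissonPmfR lam (k + 1) = poissonPmfR lam k * (lam / (k + 1)) := by
  unfold poissonPmfR
  push_cast [Nat.factorial_succ, pow_succ]
  field_simp

theorem poissonPmfR_le_of_le_of_cast_le {x m : ℕ} (hxm : x ≤ m) (hm : (m : ℝ) ≤ lam) :
    poissonPmfR lam x ≤ poissonPmfR lam m := by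
  induction m, hxm using Nat.le_induction with
  | base => rfl
  | succ n _ ih =>
    push_cast at hm
    have hratio : 1 ≤ lam / (n + 1) := (one_le_div (by positivity)).mpr hm
    rw [poissonPmfR_succ]
    calc poissonPmfR lam x ≤ poissonPmfR lam n := ih (by linarith)
      _ ≤ poissonPmfR lam n * (lam / (n + 1)) :=
        le_mul_of_one_le_right (poissonPmfR_nonneg (by linarith) n) hratio

theorem poissonPmfR_le_of_ge_of_le_cast_add_one (hlam : 0 ≤ lam) {x m : ℕ} (hmx : m ≤ x)
    (hm : lam ≤ m + 1) : poissonPmfR lam x ≤ poissonPmfR lam m := by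
  induction x, hmx using Nat.le_induction with
  | base => rfl
  | succ n hmn ih =>
    have hn : lam ≤ n + 1 := hm.trans (by exact_mod_cast Nat.succ_le_succ hmn)
    have hratio : lam / (n + 1) ≤ 1 := (div_le_one (by positivity)).mpr hn
    rw [poissonPmfR_succ]
    calc poissonPmfR lam n * (lam / (n + 1)) ≤ poissonPmfR lam n :=
          mul_le_of_le_one_right (poissonPmfR_nonneg hlam n) hratio
      _ ≤ poissonPmfR lam m := ih

theorem poissonPmfR_le_poissonPmfR_floor (hlam : 0 ≤ lam) (x : ℕ) :
    poissonPmfR lam x ≤ poissonPmfR lam ⌊lam⌋₊ := by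
  rcases le_total x ⌊lam⌋₊ with hx | hx
  · exact poissonPmfR_le_of_le_of_cast_le hx (Nat.floor_le hlam)
  · exact poissonPmfR_le_of_ge_of_le_cast_add_one hlam hx (Nat.lt_floor_add_one lam).le

theorem poissonPmfR_le_poissonPmfR_self (hlam : 0 ≤ lam) (n : ℕ) :
    poissonPmfR lam n ≤ poissonPmfR n n := by
  unfold poissonPmfR
  exact div_le_div_of_nonneg_right (exp_neg_mul_pow_le_exp_neg_mul_pow_self hlam n)
    (Nat.cast_nonneg _)

theorem poissonPmfR_self_le_one_div_sqrt {n : ℕ} (hn : n ≠ 0) :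
    poissonPmfR n n ≤ 1 / √(2 * π * n) := by
  have hn' : (0 : ℝ) < n := by exact_mod_cast Nat.pos_of_ne_zero hn
  unfold poissonPmfR
  calc exp (-n) * (n : ℝ) ^ n / n.factorial
      ≤ exp (-n) * (n : ℝ) ^ n / (√(2 * π * n) * (n / exp 1) ^ n) := by
        gcongr
        exact Stirling.le_factorial_stirling n
    _ = 1 / √(2 * π * n) := by
        rw [div_pow, exp_one_pow, exp_neg]
        field_simp

end PoissonPmf

/-- Let `lam ≥ 1` and `N ~ Poisson (lam)`. For every `x : ℕ`,
`Pr (N = x) ≤ e / √(2 π ⌊lam⌋)`. -/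
theorem poisson_pmf_le_stirling_bound
    (lam : ℝ) (hlam : 1 ≤ lam) (x : ℕ) :
    poissonPmfR lam x ≤ Real.exp 1 / Real.sqrt (2 * Real.pi * (⌊lam⌋₊ : ℝ)) := by
  have hfloor : ⌊lam⌋₊ ≠ 0 := (Nat.floor_pos.mpr hlam).ne'
  calc poissonPmfR lam x ≤ poissonPmfR lam ⌊lam⌋₊ :=
        poissonPmfR_le_poissonPmfR_floor (by linarith) x
    _ ≤ poissonPmfR ⌊lam⌋₊ ⌊lam⌋₊ := poissonPmfR_le_poissonPmfR_self (by linarith) _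
    _ ≤ 1 / √(2 * π * ⌊lam⌋₊) := poissonPmfR_self_le_one_div_sqrt hfloor
    _ ≤ exp 1 / √(2 * π * ⌊lam⌋₊) := by gcongr; exact one_le_exp zero_le_one
end

section
/- Fix integers r ≥ 2 and K ≥ 0. Let (λ_n) be positive reals with λ_n → 0 and n^{1/r}·λ_n → ∞. For each n > K, define the probability vector p^{(n)} = (p_0, …, p_r) by p_ℓ = e^{−λ_n}·λ_n^ℓ/ℓ! for 0 ≤ ℓ ≤ r−1 and p_r = Pr(Poisson(λ_n) ≥ r), and the probability vector p̄^{(n)} by p̄_ℓ = (1 − K/n)·p_ℓ for ℓ ≤ r−1 and p̄_r = (1 − K/n)·p_r + K/n. Then d_TV(Multinomial(n; p^{(n)}), Multinomial(n; p̄^{(n)})) → 0 as n → ∞. -/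
open Filter
open scoped Topology

/-- The probability mass function of the `Multinomial (n; p)` distribution on count vectors
`k : Fin d → ℕ`: it equals `n! ∏_ℓ p ℓ ^ (k ℓ) / (k ℓ)!` when `∑ ℓ, k ℓ = n`, and `0`
otherwise. -/
noncomputable def multinomialPmf {d : ℕ} (n : ℕ) (p : Fin d → ℝ) (k : Fin d → ℕ) : ℝ :=
  if (∑ ℓ, k ℓ) = n then
    (n.factorial : ℝ) * ∏ ℓ, p ℓ ^ (k ℓ) / ((k ℓ).factorial : ℝ)
  else 0

/-- The probability vector `(p_0, …, p_r)` obtained from a `Poisson (lam)` variable `N` by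
`p_ℓ = Pr (N = ℓ)` for `ℓ < r` and `p_r = Pr (N ≥ r)`. -/
noncomputable def poissonBucketVec (r : ℕ) (lam : ℝ) : Fin (r + 1) → ℝ :=
  fun ℓ => if (ℓ : ℕ) < r then poissonPmfR lam (ℓ : ℕ)
    else ∑' i : ℕ, if r ≤ i then poissonPmfR lam i else 0

/-!
Total variation is controlled by the χ²-divergence (Cauchy–Schwarz), and for multinomials the
χ²-divergence tensorizes: `1 + χ²(Mult(n; q) ‖ Mult(n; p)) = (∑ ℓ, q ℓ ^ 2 / p ℓ) ^ n`. For the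
planted vector `q = (1 - ε) p + ε δ_r` the base is `1 + ε² (1 / p_r - 1) ≤ exp (ε² / p_r)`, so
with `ε = K / n` we get `(2 d_TV)² ≤ exp (K² / (n p_r)) - 1`. Finally
`n p_r ≥ n λ^r e^{-λ} / r! = (n^{1/r} λ)^r e^{-λ} / r! → ∞`.
-/

open Finset

section Poisson

lemma hasSum_poissonPmfR (lam : ℝ) : HasSum (poissonPmfR lam) 1 := by
  have h := (NormedSpace.expSeries_div_hasSum_exp lam).mul_left (Real.exp (-lam))
  rw [← Real.exp_eq_exp_ℝ, ← Real.exp_add, neg_add_cancel, Real.exp_zero] at h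
  exact h.congr_fun fun i => mul_div_assoc ..

lemma poissonPmfR_pos {lam : ℝ} (h : 0 < lam) (x : ℕ) : 0 < poissonPmfR lam x := by
  unfold poissonPmfR
  positivity

lemma hasSum_poissonPmfR_tail (lam : ℝ) (r : ℕ) :
    HasSum (fun i => if r ≤ i then poissonPmfR lam i else 0)
      (1 - ∑ i ∈ range r, poissonPmfR lam i) := by
  have head := hasSum_sum_of_ne_finset_zero (L := .unconditional ℕ)
    (f := fun i => if i < r then poissonPmfR lam i else 0) (s := range r) fun i hi => by simp_all
  rw [sum_ite_of_true fun i hi => mem_range.1 hi] at head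
  refine ((hasSum_poissonPmfR lam).sub head).congr_fun fun i => ?_
  split_ifs <;> first | omega | ring

lemma poissonBucketVec_last (r : ℕ) (lam : ℝ) :
    poissonBucketVec r lam (Fin.last r) = 1 - ∑ i ∈ range r, poissonPmfR lam i := by
  simpa [poissonBucketVec] using (hasSum_poissonPmfR_tail lam r).tsum_eq

lemma poissonPmfR_le_poissonBucketVec_last {lam : ℝ} (h : 0 < lam) (r : ℕ) :
    poissonPmfR lam r ≤ poissonBucketVec r lam (Fin.last r) := by
  rw [poissonBucketVec_last]
  have := le_hasSum (hasSum_poissonPmfR_tail lam r) r fun j _ => by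
    split_ifs
    exacts [(poissonPmfR_pos h j).le, le_rfl]
  simpa using this

lemma poissonBucketVec_pos {lam : ℝ} (h : 0 < lam) {r : ℕ} (ℓ : Fin (r + 1)) :
    0 < poissonBucketVec r lam ℓ := by
  rcases Fin.eq_castSucc_or_eq_last ℓ with ⟨i, rfl⟩ | rfl
  · simpa [poissonBucketVec] using poissonPmfR_pos h i
  · exact (poissonPmfR_pos h r).trans_le (poissonPmfR_le_poissonBucketVec_last h r)

lemma sum_poissonBucketVec (r : ℕ) (lam : ℝ) : ∑ ℓ, poissonBucketVec r lam ℓ = 1 := by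
  rw [Fin.sum_univ_castSucc, poissonBucketVec_last, ← Fin.sum_univ_eq_sum_range]
  simp [poissonBucketVec]

end Poisson

section Multinomial

variable {d : ℕ}

lemma multinomialPmf_of_notMem {n : ℕ} (p : Fin d → ℝ) {k : Fin d → ℕ}
    (hk : k ∉ piAntidiag univ n) : multinomialPmf n p k = 0 := by
  simp_all [multinomialPmf, mem_piAntidiag]

lemma multinomialPmf_pos {n : ℕ} {p : Fin d → ℝ} (hp : ∀ ℓ, 0 < p ℓ) {k : Fin d → ℕ}
    (hk : k ∈ piAntidiag univ n) : 0 < multinomialPmf n p k := by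
  rw [multinomialPmf, if_pos (mem_piAntidiag.1 hk).1]
  exact mul_pos (by positivity) (prod_pos fun ℓ _ => by have := hp ℓ; positivity)

lemma sum_multinomialPmf (n : ℕ) (p : Fin d → ℝ) :
    ∑ k ∈ piAntidiag univ n, multinomialPmf n p k = (∑ ℓ, p ℓ) ^ n := by
  rw [sum_pow_eq_sum_piAntidiag]
  refine sum_congr rfl fun k hk => ?_
  have hsum := (mem_piAntidiag.1 hk).1
  have hspec := Nat.multinomial_spec univ k
  rw [hsum] at hspec
  rw [multinomialPmf, if_pos hsum, prod_div_distrib, ← hspec]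
  push_cast
  field_simp

/-- No positivity of `p` is needed: if `p ℓ = 0 < k ℓ`, both sides are `0` since `x / 0 = 0`. -/
lemma multinomialPmf_sq_div (n : ℕ) (p q : Fin d → ℝ) (k : Fin d → ℕ) :
    multinomialPmf n q k ^ 2 / multinomialPmf n p k
      = multinomialPmf n (fun ℓ => q ℓ ^ 2 / p ℓ) k := by
  unfold multinomialPmf
  split_ifs
  · have hn : (n.factorial : ℝ) ≠ 0 := by positivity
    rw [mul_pow, sq (n.factorial : ℝ), mul_assoc, mul_div_mul_left _ _ hn, mul_div_assoc,
      ← prod_pow, ← prod_div_distrib]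
    refine congrArg _ (prod_congr rfl fun ℓ _ => ?_)
    have hk : ((k ℓ).factorial : ℝ) ≠ 0 := by positivity
    rw [div_pow, ← pow_mul, div_pow, ← pow_mul]
    field_simp
    ring
  · simp

lemma sq_sum_abs_sub_le_sum_sq_div_sub_one {ι : Type*} (s : Finset ι) {P Q : ι → ℝ}
    (hP : ∀ i ∈ s, 0 < P i) (hPs : ∑ i ∈ s, P i = 1) (hQs : ∑ i ∈ s, Q i = 1) :
    (∑ i ∈ s, |P i - Q i|) ^ 2 ≤ ∑ i ∈ s, Q i ^ 2 / P i - 1 := by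
  have h := sq_sum_div_le_sum_sq_div s (fun i => |P i - Q i|) hP
  rw [hPs, div_one] at h
  calc _ ≤ ∑ i ∈ s, |P i - Q i| ^ 2 / P i := h
    _ = ∑ i ∈ s, (P i - 2 * Q i + Q i ^ 2 / P i) := sum_congr rfl fun i hi => by
        rw [sq_abs]
        field_simp [(hP i hi).ne']
        ring
    _ = _ := by
        rw [sum_add_distrib, sum_sub_distrib, ← mul_sum, hPs, hQs]
        ring

lemma sq_tsum_abs_sub_multinomialPmf_le (n : ℕ) {p q : Fin d → ℝ} (hp : ∀ ℓ, 0 < p ℓ)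
    (hps : ∑ ℓ, p ℓ = 1) (hqs : ∑ ℓ, q ℓ = 1) :
    (∑' k, |multinomialPmf n p k - multinomialPmf n q k|) ^ 2
      ≤ (∑ ℓ, q ℓ ^ 2 / p ℓ) ^ n - 1 := by
  have h := sq_sum_abs_sub_le_sum_sq_div_sub_one (piAntidiag univ n)
    (fun k hk => multinomialPmf_pos hp hk)
    (by rw [sum_multinomialPmf, hps, one_pow]) (by rw [sum_multinomialPmf, hqs, one_pow])
  simp_rw [multinomialPmf_sq_div, sum_multinomialPmf] at h
  rwa [tsum_eq_sum fun k hk => by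
    rw [multinomialPmf_of_notMem p hk, multinomialPmf_of_notMem q hk, sub_zero, abs_zero]]

end Multinomial

section Planted

variable {ι : Type*} [Fintype ι] [DecidableEq ι] {p : ι → ℝ}

lemma sum_planted (hps : ∑ ℓ, p ℓ = 1) (i₀ : ι) (ε : ℝ) :
    ∑ ℓ, ((1 - ε) * p ℓ + if ℓ = i₀ then ε else 0) = 1 := by
  rw [sum_add_distrib, ← mul_sum, hps, sum_ite_eq']
  simp

lemma sum_sq_div_planted (hps : ∑ ℓ, p ℓ = 1) {i₀ : ι} (hi₀ : p i₀ ≠ 0) (ε : ℝ) :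
    ∑ ℓ, ((1 - ε) * p ℓ + if ℓ = i₀ then ε else 0) ^ 2 / p ℓ = 1 + ε ^ 2 * (1 / p i₀ - 1) := by
  have hrest : ∑ ℓ ∈ {i₀}ᶜ, p ℓ = 1 - p i₀ := by
    rw [← hps, Fintype.sum_eq_add_sum_compl i₀]
    ring
  rw [Fintype.sum_eq_add_sum_compl i₀, if_pos rfl]
  rw [sum_congr rfl fun ℓ hℓ => by
    rw [if_neg (mem_compl.1 hℓ ∘ mem_singleton.2), add_zero, mul_pow, sq (p ℓ),
      mul_div_assoc, mul_self_div_self]]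
  rw [← mul_sum, hrest]
  field_simp
  ring

end Planted

lemma sq_tsum_abs_sub_multinomialPmf_planted_le {d : ℕ} (n : ℕ) {p : Fin d → ℝ}
    (hp : ∀ ℓ, 0 < p ℓ) (hps : ∑ ℓ, p ℓ = 1) (i₀ : Fin d) (ε : ℝ) :
    (∑' k, |multinomialPmf n p k -
        multinomialPmf n (fun ℓ => (1 - ε) * p ℓ + if ℓ = i₀ then ε else 0) k|) ^ 2
      ≤ Real.exp (n * ε ^ 2 / p i₀) - 1 := by
  refine (sq_tsum_abs_sub_multinomialPmf_le n hp hps (sum_planted hps i₀ ε)).trans ?_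
  have hnonneg : 0 ≤ ∑ ℓ, ((1 - ε) * p ℓ + if ℓ = i₀ then ε else 0) ^ 2 / p ℓ :=
    sum_nonneg fun ℓ _ => div_nonneg (sq_nonneg _) (hp ℓ).le
  have hle : ∑ ℓ, ((1 - ε) * p ℓ + if ℓ = i₀ then ε else 0) ^ 2 / p ℓ
      ≤ Real.exp (ε ^ 2 / p i₀) := by
    rw [sum_sq_div_planted hps (hp i₀).ne']
    calc 1 + ε ^ 2 * (1 / p i₀ - 1)
        ≤ ε ^ 2 / p i₀ + 1 := by rw [mul_sub, mul_one_div]; linarith [sq_nonneg ε]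
      _ ≤ _ := Real.add_one_le_exp _
  rw [mul_div_assoc, Real.exp_nat_mul]
  exact sub_le_sub_right (pow_le_pow_left₀ hnonneg hle n) 1

lemma tendsto_natCast_mul_poissonBucketVec_last_atTop {r : ℕ} (hr : r ≠ 0) {lam : ℕ → ℝ}
    (hpos : ∀ n, 0 < lam n) (hlam0 : Tendsto lam atTop (𝓝 0))
    (hlam : Tendsto (fun n : ℕ => (n : ℝ) ^ ((1 : ℝ) / r) * lam n) atTop atTop) :
    Tendsto (fun n : ℕ => n * poissonBucketVec r (lam n) (Fin.last r)) atTop atTop := by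
  have hpow : Tendsto (fun n : ℕ => (n : ℝ) * lam n ^ r) atTop atTop :=
    ((tendsto_pow_atTop hr).comp hlam).congr fun n => by
      simp [mul_pow, Real.rpow_inv_natCast_pow (Nat.cast_nonneg n) hr]
  have hexp : Tendsto (fun n => Real.exp (-lam n) / r.factorial) atTop
      (𝓝 (1 / r.factorial)) := by
    have hneg : Tendsto (fun n => -lam n) atTop (𝓝 0) := by simpa using hlam0.neg
    simpa using ((Real.continuous_exp.tendsto 0).comp hneg).div_const (r.factorial : ℝ)
  refine tendsto_atTop_mono (fun n => ?_) (hpow.atTop_mul_pos (by positivity) hexp)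
  calc (n : ℝ) * lam n ^ r * (Real.exp (-lam n) / r.factorial)
      = n * poissonPmfR (lam n) r := by rw [poissonPmfR]; ring
    _ ≤ _ := mul_le_mul_of_nonneg_left
        (poissonPmfR_le_poissonBucketVec_last (hpos n) r) n.cast_nonneg

/-- Fix `r ≥ 2` and `K ≥ 0`. Let `lam n > 0` with `lam n → 0` and
`n^{1/r} * lam n → ∞`. For `n > K`, let `p⁽ⁿ⁾` be the Poisson bucket probability vector of
`Poisson (lam n)` with threshold `r`, and let `p̄⁽ⁿ⁾_ℓ = (1 - K/n) p⁽ⁿ⁾_ℓ + [ℓ = r] K/n`. Then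
`d_TV(Multinomial (n; p⁽ⁿ⁾), Multinomial (n; p̄⁽ⁿ⁾)) → 0` as `n → ∞`, where
`d_TV(P, Q) = (1/2) ∑_k |P k - Q k|`. -/
theorem dTV_multinomial_planted_tendsto_zero
    (r K : ℕ) (hr : 2 ≤ r) (lam : ℕ → ℝ) (hpos : ∀ n, 0 < lam n)
    (hlam0 : Tendsto lam atTop (𝓝 0))
    (hlam : Tendsto (fun n : ℕ => (n : ℝ) ^ ((1 : ℝ) / (r : ℝ)) * lam n) atTop atTop) :
    Tendsto (fun n : ℕ => (1 / 2 : ℝ) * ∑' k : Fin (r + 1) → ℕ,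
        |multinomialPmf n (poissonBucketVec r (lam n)) k -
          multinomialPmf n
            (fun ℓ => (1 - (K : ℝ) / (n : ℝ)) * poissonBucketVec r (lam n) ℓ +
              (if ℓ = Fin.last r then (K : ℝ) / (n : ℝ) else 0)) k|)
      atTop (𝓝 0) := by
  set pr := fun n => poissonBucketVec r (lam n) (Fin.last r)
  have hbound (n : ℕ) : ∑' k : Fin (r + 1) → ℕ,
      |multinomialPmf n (poissonBucketVec r (lam n)) k -
        multinomialPmf n (fun ℓ => (1 - (K : ℝ) / (n : ℝ)) * poissonBucketVec r (lam n) ℓ +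
          (if ℓ = Fin.last r then (K : ℝ) / (n : ℝ) else 0)) k|
      ≤ Real.sqrt (Real.exp (K ^ 2 / (n * pr n)) - 1) := by
    have h := sq_tsum_abs_sub_multinomialPmf_planted_le n (poissonBucketVec_pos (hpos n))
      (sum_poissonBucketVec r (lam n)) (Fin.last r) (K / n)
    have hK : (n : ℝ) * (K / n) ^ 2 / pr n = K ^ 2 / (n * pr n) := by
      rcases eq_or_ne (n : ℝ) 0 with hn | hn
      · simp [hn] -- both sides are `0` since `x / 0 = 0`
      · field_simp
    rw [hK] at h
    exact Real.le_sqrt_of_sq_le h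
  have hexp : Tendsto (fun x => Real.sqrt (Real.exp x - 1)) (𝓝 0) (𝓝 0) := by
    have hcont : Continuous fun x => Real.sqrt (Real.exp x - 1) := by fun_prop
    simpa using hcont.tendsto 0
  have hsmall := hexp.comp <| (tendsto_const_nhds (x := (K : ℝ) ^ 2)).div_atTop <|
    tendsto_natCast_mul_poissonBucketVec_last_atTop (by omega) hpos hlam0 hlam
  refine squeeze_zero (fun n => ?_) (fun n => mul_le_mul_of_nonneg_left (hbound n) (by norm_num))
    (by simpa using hsmall.const_mul (1 / 2 : ℝ))
  positivity
end
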